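/- arXiv:0705.0233 — 2 statements merged into one kernel-verified Lean document; each statement's English description precedes it below -/
import Mathlib

section
/- Let n agents with states x_i in R^m obey x_i' = sum_{j in N_i} a_{ij}(x_j - x_i) + sum_{q=1}^k b_i^q (x_0^q - x_i), where x_0^1,...,x_0^k in R^m are fixed leader positions, a_{ij} = a_{ji} >= 0, and b_i^q >= 0. If every connected component of the agent interaction graph contains an agent i with b_i^q > 0 for some q, then every solution converges, and each limit x_i* lies in the convex hull of {x_0^1,...,x_0^k}. -/
/-!
In stacked form the dynamics read `x' = B x₀ - H x`, where `H = L + diag β` with `β = B 1` is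
the grounded Laplacian. Its quadratic form `∑ βᵢ vᵢ² + ½ ∑ aᵢⱼ (vᵢ - vⱼ)²` vanishes only if `v`
is constant along edges and zero at agents linked to a leader, so `H` is positive definite and
`|x - x*|²` decays exponentially to `0`, with `x* = H⁻¹ B x₀`. A discrete minimum principle (the
minimum of a `w` with `H w ≥ 0` propagates along edges up to an agent linked to a leader) gives
`H⁻¹ ≥ 0` entrywise, and `H 1 = β = B 1` makes `H⁻¹ B` row-stochastic: every row of `x*` is a
convex combination of the leader positions.
-/

open Matrix Filter

open Topology

theorem Relation.ReflTransGen.induction_of_imp {α : Type*} {r : α → α → Prop} {P : α → Prop}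
    (h : ∀ a b, r a b → P a → P b) {a b : α} (hab : Relation.ReflTransGen r a b) (ha : P a) :
    P b := by
  induction hab with
  | refl => exact ha
  | tail _ hbc ih => exact h _ _ hbc ih

theorem le_mul_exp_of_hasDerivAt_le_mul {g g' : ℝ → ℝ} {K : ℝ} (hg : ∀ t, HasDerivAt g (g' t) t)
    (hK : ∀ t, g' t ≤ K * g t) {t : ℝ} (ht : 0 ≤ t) : g t ≤ g 0 * Real.exp (K * t) := by
  have := le_gronwallBound_of_liminf_deriv_right_le (f' := g') (ε := 0) (a := 0) (b := t)
    (fun s _ => (hg s).continuousAt.continuousWithinAt)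
    (fun s _ r hr => (hg s).hasDerivWithinAt.liminf_right_slope_le hr) le_rfl
    (fun s _ => by simpa using hK s) t ⟨ht, le_rfl⟩
  rwa [gronwallBound_ε0, sub_zero] at this

namespace Matrix

def IsGrounded {ι R : Type*} [Zero R] [LT R] (A : Matrix ι ι R) (β : ι → R) : Prop :=
  ∀ i, ∃ j, Relation.ReflTransGen (fun a c => 0 < A a c) i j ∧ 0 < β j

theorem mul_apply_mem_convexHull_range {ι σ κ R : Type*} [Fintype σ] [Field R] [LinearOrder R]
    [IsStrictOrderedRing R] {P : Matrix ι σ R} (hP : ∀ i q, 0 ≤ P i q) (hrow : P *ᵥ 1 = 1)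
    (X : Matrix σ κ R) (i : ι) : (P * X) i ∈ convexHull R (Set.range X) := by
  have hXi : (P * X) i = ∑ q, P i q • X q := by
    ext d
    simp [mul_apply, Finset.sum_apply]
  rw [hXi]
  refine (convex_convexHull R _).sum_mem (fun q _ => hP i q) ?_
    (fun q _ => subset_convexHull R _ ⟨q, rfl⟩)
  simpa [mulVec, dotProduct] using congrFun hrow i

variable {ι : Type*} [Fintype ι]

theorem PosDef.exists_pos_mul_dotProduct_self_le {M : Matrix ι ι ℝ} (hM : M.PosDef) :
    ∃ c, 0 < c ∧ ∀ v, c * (v ⬝ᵥ v) ≤ v ⬝ᵥ M *ᵥ v := by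
  rcases isEmpty_or_nonempty ι with hι | hι
  · exact ⟨1, one_pos, fun v => by simp [dotProduct]⟩
  have hpos : ∀ v : ι → ℝ, v ≠ 0 → 0 < v ⬝ᵥ v := fun v hv =>
    lt_of_le_of_ne (Finset.sum_nonneg fun i _ => mul_self_nonneg (v i))
      (Ne.symm (mt dotProduct_self_eq_zero.1 hv))
  set ρ : (ι → ℝ) → ℝ := fun v => (v ⬝ᵥ M *ᵥ v) / (v ⬝ᵥ v)
  have hρ_smul : ∀ v (s : ℝ), s ≠ 0 → ρ (s • v) = ρ v := fun v s hs => by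
    simp only [ρ, mulVec_smul, smul_dotProduct, dotProduct_smul, smul_eq_mul]
    field_simp
  have hρ_cont : ContinuousOn ρ (Metric.sphere 0 1) :=
    ContinuousOn.div (by fun_prop) (by fun_prop) fun v hv =>
      (hpos v (ne_zero_of_mem_unit_sphere ⟨v, hv⟩)).ne'
  obtain ⟨u, hu, hmin⟩ := (isCompact_sphere (0 : ι → ℝ) 1).exists_isMinOn
    (NormedSpace.sphere_nonempty.2 zero_le_one) hρ_cont
  have hu0 : u ≠ 0 := ne_zero_of_mem_unit_sphere ⟨u, hu⟩
  refine ⟨ρ u, div_pos (by simpa using hM.dotProduct_mulVec_pos hu0) (hpos u hu0), fun v => ?_⟩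
  rcases eq_or_ne v 0 with rfl | hv
  · simp
  have hle : ρ u ≤ ρ v := by
    rw [← hρ_smul v ‖v‖⁻¹ (inv_ne_zero (norm_ne_zero_iff.2 hv))]
    refine hmin ?_
    rw [mem_sphere_zero_iff_norm, norm_smul, norm_inv, norm_norm,
      inv_mul_cancel₀ (norm_ne_zero_iff.2 hv)]
  rwa [le_div_iff₀ (hpos v hv)] at hle

theorem tendsto_zero_of_hasDerivAt_neg_mulVec {M : Matrix ι ι ℝ} (hM : M.PosDef)
    {y : ℝ → ι → ℝ} (hy : ∀ t, HasDerivAt y (-(M *ᵥ y t)) t) : Tendsto y atTop (𝓝 0) := by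
  obtain ⟨c, hc, hcM⟩ := hM.exists_pos_mul_dotProduct_self_le
  set g : ℝ → ℝ := fun t => y t ⬝ᵥ y t
  have hg : ∀ t, HasDerivAt g (-2 * (y t ⬝ᵥ M *ᵥ y t)) t := fun t => by
    have hyi := hasDerivAt_pi.1 (hy t)
    refine (HasDerivAt.fun_sum fun i _ => (hyi i).mul (hyi i)).congr_deriv ?_
    simp only [dotProduct, Finset.mul_sum, Pi.neg_apply]
    exact Finset.sum_congr rfl fun i _ => by ring
  have hbound : ∀ t, 0 ≤ t → g t ≤ g 0 * Real.exp (-2 * c * t) := fun t ht =>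
    le_mul_exp_of_hasDerivAt_le_mul hg (fun s => by linarith [hcM (y s)]) ht
  have hexp : Tendsto (fun t => g 0 * Real.exp (-2 * c * t)) atTop (𝓝 0) := by
    simpa using (Real.tendsto_exp_atBot.comp
      (tendsto_id.const_mul_atTop_of_neg (by linarith : -2 * c < 0))).const_mul (g 0)
  have hg0 : Tendsto g atTop (𝓝 0) :=
    squeeze_zero' (.of_forall fun t => Finset.sum_nonneg fun i _ => mul_self_nonneg (y t i))
      (eventually_ge_atTop 0 |>.mono hbound) hexp
  refine tendsto_pi_nhds.2 fun i =>
    squeeze_zero_norm (fun t => Real.abs_le_sqrt ?_) (by simpa using hg0.sqrt)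
  rw [sq]
  exact Finset.single_le_sum (f := fun j => y t j * y t j) (fun j _ => mul_self_nonneg (y t j))
    (Finset.mem_univ i)

theorem tendsto_zero_of_hasDerivAt_neg_mul {κ : Type*} [Fintype κ] {M : Matrix ι ι ℝ}
    (hM : M.PosDef) {Y : ℝ → ι → κ → ℝ} (hY : ∀ t, HasDerivAt Y (-(M * of (Y t))) t) :
    Tendsto Y atTop (𝓝 0) := by
  have hcol : ∀ d, Tendsto (fun t i => Y t i d) atTop (𝓝 0) := fun d =>
    tendsto_zero_of_hasDerivAt_neg_mulVec hM fun t => by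
      refine hasDerivAt_pi.2 fun i => ?_
      convert hasDerivAt_pi.1 (hasDerivAt_pi.1 (hY t) i) d using 1
      simp [mul_apply, mulVec, dotProduct]
  exact tendsto_pi_nhds.2 fun i => tendsto_pi_nhds.2 fun d => tendsto_pi_nhds.1 (hcol d) i

variable [DecidableEq ι]

/-- The matrix `H = L + diag β` of the paper, `L` the Laplacian of the weights `A` (whose
diagonal does not matter) and `β i = ∑ q, b i q`. -/
def groundedLaplacian {R : Type*} [CommRing R] (A : Matrix ι ι R) (β : ι → R) : Matrix ι ι R :=
  diagonal (fun i => β i + ∑ j, A i j) - A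

section CommRing

variable {R : Type*} [CommRing R] {A : Matrix ι ι R} {β : ι → R}

theorem groundedLaplacian_mulVec_apply (v : ι → R) (i : ι) :
    (groundedLaplacian A β *ᵥ v) i = β i * v i + ∑ j, A i j * (v i - v j) := by
  rw [groundedLaplacian, sub_mulVec, Pi.sub_apply, mulVec_diagonal]
  simp only [mulVec, dotProduct, mul_sub, Finset.sum_sub_distrib]
  rw [← Finset.sum_mul]
  ring

theorem groundedLaplacian_mulVec_one : groundedLaplacian A β *ᵥ 1 = β := by
  ext i
  simp [groundedLaplacian_mulVec_apply]

theorem two_mul_dotProduct_groundedLaplacian_mulVec (hA : A.IsSymm) (v : ι → R) :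
    2 * (v ⬝ᵥ groundedLaplacian A β *ᵥ v) =
      2 * ∑ i, β i * v i ^ 2 + ∑ i, ∑ j, A i j * (v i - v j) ^ 2 := by
  have hexpand : v ⬝ᵥ groundedLaplacian A β *ᵥ v =
      ∑ i, β i * v i ^ 2 + ∑ i, ∑ j, A i j * (v i * (v i - v j)) := by
    simp only [dotProduct, groundedLaplacian_mulVec_apply, mul_add, Finset.sum_add_distrib,
      Finset.mul_sum]
    congr 1 <;> refine Finset.sum_congr rfl fun i _ => ?_
    · ring
    · exact Finset.sum_congr rfl fun j _ => by ring
  have hswap : ∑ i, ∑ j, A i j * (v i * (v i - v j)) =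
      ∑ i, ∑ j, A i j * (v j * (v j - v i)) := by
    rw [Finset.sum_comm]
    simp_rw [hA.apply]
  rw [hexpand, mul_add, two_mul (∑ i, ∑ j, _)]
  nth_rw 2 [hswap]
  simp only [← Finset.sum_add_distrib]
  congr 1
  exact Finset.sum_congr rfl fun i _ => Finset.sum_congr rfl fun j _ => by ring

theorem sum_smul_sub_add_sum_smul_sub_eq {σ κ : Type*} [Fintype σ] (A : Matrix ι ι R)
    (b : ι → σ → R) (x₀ : σ → κ → R) (v : ι → κ → R) :
    (fun i => (∑ j, A i j • (v j - v i)) + ∑ q, b i q • (x₀ q - v i)) =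
      of b * of x₀ - groundedLaplacian A (of b *ᵥ 1) * of v := by
  rw [groundedLaplacian, Matrix.sub_mul]
  ext i d
  simp only [sub_apply, diagonal_mul]
  simp only [Pi.add_apply, Finset.sum_apply, Pi.smul_apply, Pi.sub_apply, smul_eq_mul, mul_sub,
    Finset.sum_sub_distrib, mul_apply, of_apply, mulVec, dotProduct, Pi.one_apply, mul_one,
    add_mul, Finset.sum_mul]
  ring

end CommRing

section LinearOrderedRing

variable {R : Type*} [CommRing R] [LinearOrder R] [IsStrictOrderedRing R]
  {A : Matrix ι ι R} {β : ι → R}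

theorem nonneg_of_nonneg_groundedLaplacian_mulVec (hA : ∀ i j, 0 ≤ A i j) (hβ : 0 ≤ β)
    (hg : IsGrounded A β) {w : ι → R} (hw : 0 ≤ groundedLaplacian A β *ᵥ w) : 0 ≤ w := by
  intro i
  obtain ⟨a, -, ha⟩ := Finset.exists_min_image Finset.univ w ⟨i, Finset.mem_univ i⟩
  have hmin : ∀ j, w a ≤ w j := fun j => ha j (Finset.mem_univ j)
  by_contra! hneg
  have hwa : w a < 0 := (hmin i).trans_lt hneg
  have hterm : ∀ c j, w c = w a → A c j * (w c - w j) ≤ 0 := fun c j hc =>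
    mul_nonpos_of_nonneg_of_nonpos (hA c j) (by linarith [hmin j])
  have hedge : ∀ b c, 0 < A b c → w b = w a → w c = w a := by
    intro b c hbc hb
    by_contra hc
    have hlt : ∑ j, A b j * (w b - w j) < 0 :=
      Finset.sum_neg' (fun j _ => hterm b j hb)
        ⟨c, Finset.mem_univ c, mul_neg_of_pos_of_neg hbc
          (by linarith [lt_of_le_of_ne (hmin c) (Ne.symm hc)])⟩
    have := hw b
    rw [Pi.zero_apply, groundedLaplacian_mulVec_apply] at this
    linarith [mul_nonpos_of_nonneg_of_nonpos (hβ b) (hb ▸ hwa.le)]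
  obtain ⟨j, haj, hβj⟩ := hg a
  have hj : w j = w a := haj.induction_of_imp (P := fun c => w c = w a) hedge rfl
  have := hw j
  rw [Pi.zero_apply, groundedLaplacian_mulVec_apply] at this
  linarith [Finset.sum_nonpos fun l (_ : l ∈ Finset.univ) => hterm j l hj,
    mul_neg_of_pos_of_neg hβj (hj ▸ hwa)]

end LinearOrderedRing

section LinearOrderedField

variable {R : Type*} [Field R] [LinearOrder R] [IsStrictOrderedRing R] {A : Matrix ι ι R}

theorem isUnit_groundedLaplacian {β : ι → R} (hA : ∀ i j, 0 ≤ A i j) (hβ : 0 ≤ β)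
    (hg : IsGrounded A β) : IsUnit (groundedLaplacian A β) := by
  rw [← mulVec_injective_iff_isUnit]
  intro v w hvw
  have hvw' : groundedLaplacian A β *ᵥ (v - w) = 0 := by rw [mulVec_sub, hvw, sub_self]
  have hwv' : groundedLaplacian A β *ᵥ (w - v) = 0 := by rw [mulVec_sub, hvw, sub_self]
  exact le_antisymm
    (sub_nonneg.1 (nonneg_of_nonneg_groundedLaplacian_mulVec hA hβ hg hwv'.ge))
    (sub_nonneg.1 (nonneg_of_nonneg_groundedLaplacian_mulVec hA hβ hg hvw'.ge))

theorem groundedLaplacian_inv_nonneg {β : ι → R} (hA : ∀ i j, 0 ≤ A i j) (hβ : 0 ≤ β)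
    (hg : IsGrounded A β) (i j : ι) : 0 ≤ (groundedLaplacian A β)⁻¹ i j := by
  have hdet := (isUnit_iff_isUnit_det _).1 (isUnit_groundedLaplacian hA hβ hg)
  have hcol : 0 ≤ (groundedLaplacian A β)⁻¹ *ᵥ Pi.single j 1 := by
    apply nonneg_of_nonneg_groundedLaplacian_mulVec hA hβ hg
    rw [mulVec_mulVec, mul_nonsing_inv _ hdet, one_mulVec]
    exact Pi.single_nonneg.2 zero_le_one
  simpa [mulVec_single_one] using hcol i

theorem groundedLaplacian_inv_mul_mul_mem_convexHull_range {σ κ : Type*} [Fintype σ]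
    {B : Matrix ι σ R} (hA : ∀ i j, 0 ≤ A i j) (hB : ∀ i q, 0 ≤ B i q)
    (hg : IsGrounded A (B *ᵥ 1)) (X : Matrix σ κ R) (i : ι) :
    ((groundedLaplacian A (B *ᵥ 1))⁻¹ * B * X) i ∈ convexHull R (Set.range X) := by
  set H := groundedLaplacian A (B *ᵥ 1)
  have hβ : 0 ≤ B *ᵥ 1 := fun i => Finset.sum_nonneg fun q _ => by simpa using hB i q
  have hdet : IsUnit H.det := (isUnit_iff_isUnit_det _).1 (isUnit_groundedLaplacian hA hβ hg)
  refine mul_apply_mem_convexHull_range (fun i q => ?_) ?_ X i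
  · exact Finset.sum_nonneg fun l _ =>
      mul_nonneg (groundedLaplacian_inv_nonneg hA hβ hg i l) (hB l q)
  · calc (H⁻¹ * B) *ᵥ 1 = H⁻¹ *ᵥ (H *ᵥ 1) := by rw [groundedLaplacian_mulVec_one, mulVec_mulVec]
      _ = 1 := by rw [mulVec_mulVec, nonsing_inv_mul _ hdet, one_mulVec]

end LinearOrderedField

theorem posDef_groundedLaplacian {A : Matrix ι ι ℝ} {β : ι → ℝ} (hA : A.IsSymm)
    (hA0 : ∀ i j, 0 ≤ A i j) (hβ : 0 ≤ β) (hg : IsGrounded A β) :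
    (groundedLaplacian A β).PosDef := by
  refine PosDef.of_dotProduct_mulVec_pos
    (isHermitian_iff_isSymm.2 ((isSymm_diagonal _).sub hA)) fun v hv => ?_
  rw [star_trivial]
  have hid := two_mul_dotProduct_groundedLaplacian_mulVec (β := β) hA v
  have hleader_nonneg : ∀ i ∈ Finset.univ, 0 ≤ β i * v i ^ 2 :=
    fun i _ => mul_nonneg (hβ i) (sq_nonneg _)
  have hedge_nonneg : ∀ i ∈ Finset.univ, 0 ≤ ∑ j, A i j * (v i - v j) ^ 2 :=
    fun i _ => Finset.sum_nonneg fun j _ => mul_nonneg (hA0 i j) (sq_nonneg _)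
  by_contra! hle
  have hleader := (Finset.sum_eq_zero_iff_of_nonneg hleader_nonneg).1 (by
    linarith [Finset.sum_nonneg hleader_nonneg, Finset.sum_nonneg hedge_nonneg])
  have hedges := (Finset.sum_eq_zero_iff_of_nonneg hedge_nonneg).1 (by
    linarith [Finset.sum_nonneg hleader_nonneg, Finset.sum_nonneg hedge_nonneg])
  have hedge : ∀ a c, 0 < A a c → v a = v c := fun a c hac => by
    have := (Finset.sum_eq_zero_iff_of_nonneg fun j _ => mul_nonneg (hA0 a j) (sq_nonneg _)).1
      (hedges a (Finset.mem_univ a)) c (Finset.mem_univ c)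
    rw [mul_eq_zero, sq_eq_zero_iff, sub_eq_zero] at this
    exact this.resolve_left hac.ne'
  refine hv (funext fun i => ?_)
  obtain ⟨j, hij, hβj⟩ := hg i
  have hj : v j = v i := hij.induction_of_imp (P := fun c => v c = v i)
    (fun a c hac ha => (hedge a c hac).symm.trans ha) rfl
  have := hleader j (Finset.mem_univ j)
  rw [mul_eq_zero, sq_eq_zero_iff] at this
  rw [← hj, this.resolve_left hβj.ne', Pi.zero_apply]

end Matrix

theorem agents_converge_to_leader_polytope_general
    (n k m : ℕ) (A : Matrix (Fin n) (Fin n) ℝ)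
    (hsymm : ∀ i j, A i j = A j i)
    (hnonneg : ∀ i j, 0 ≤ A i j)
    (b : Fin n → Fin k → ℝ) (hb : ∀ i q, 0 ≤ b i q)
    (x₀ : Fin k → Fin m → ℝ)
    (hcomp : ∀ i : Fin n, ∃ j : Fin n,
      Relation.ReflTransGen (fun a c => 0 < A a c) i j ∧ ∃ q, 0 < b j q)
    (x : ℝ → Fin n → Fin m → ℝ)
    (hx : ∀ t, HasDerivAt x
      (fun i => (∑ j, A i j • (x t j - x t i)) + ∑ q, b i q • (x₀ q - x t i)) t) :
    ∃ xl : Fin n → Fin m → ℝ, Tendsto x atTop (nhds xl) ∧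
      ∀ i, xl i ∈ convexHull ℝ (Set.range x₀) := by
  set H := groundedLaplacian A (of b *ᵥ 1)
  have hβ : 0 ≤ of b *ᵥ 1 := fun i => by
    simpa [mulVec, dotProduct] using Finset.sum_nonneg fun q (_ : q ∈ Finset.univ) => hb i q
  have hg : IsGrounded A (of b *ᵥ 1) := fun i => (hcomp i).imp fun j ⟨hij, q, hq⟩ =>
    ⟨hij, Finset.sum_pos' (fun q _ => by simpa using hb j q) ⟨q, Finset.mem_univ q, by simpa⟩⟩
  have hH : H.PosDef := posDef_groundedLaplacian (IsSymm.ext fun i j => hsymm j i) hnonneg hβ hg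
  set xl : Fin n → Fin m → ℝ := H⁻¹ * of b * of x₀
  have hHxl : H * of xl = of b * of x₀ := by
    change H * (H⁻¹ * of b * of x₀) = _
    rw [← Matrix.mul_assoc, ← Matrix.mul_assoc,
      mul_nonsing_inv _ ((isUnit_iff_isUnit_det H).1 hH.isUnit), Matrix.one_mul]
  refine ⟨xl, ?_, groundedLaplacian_inv_mul_mul_mem_convexHull_range hnonneg hb hg (of x₀)⟩
  have hdecay : Tendsto (fun t => x t - xl) atTop (𝓝 0) :=
    tendsto_zero_of_hasDerivAt_neg_mul hH fun t => by
      refine ((hx t).sub_const xl).congr_deriv ?_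
      rw [sum_smul_sub_add_sum_smul_sub_eq, ← hHxl, ← of_sub_of, Matrix.mul_sub, neg_sub]
  simpa using hdecay.add_const xl

/-- With the neighbor-based rule and multiple leaders, if every component of the agent
graph contains an agent linked to some leader, then every solution converges and each
limit position lies in the convex hull (polytope) of the leaders. -/
theorem agents_converge_to_leader_polytope
    (n k m : ℕ) (A : Matrix (Fin n) (Fin n) ℝ)
    (hsymm : ∀ i j, A i j = A j i)
    (hnonneg : ∀ i j, 0 ≤ A i j)
    (hdiag : ∀ i, A i i = 0)
    (b : Fin n → Fin k → ℝ) (hb : ∀ i q, 0 ≤ b i q)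
    (x₀ : Fin k → Fin m → ℝ)
    (hcomp : ∀ i : Fin n, ∃ j : Fin n,
      Relation.ReflTransGen (fun a c => 0 < A a c) i j ∧ ∃ q, 0 < b j q)
    (x : ℝ → Fin n → Fin m → ℝ)
    (hx : ∀ t, HasDerivAt x
      (fun i => (∑ j, A i j • (x t j - x t i)) + ∑ q, b i q • (x₀ q - x t i)) t) :
    ∃ xl : Fin n → Fin m → ℝ, Tendsto x atTop (nhds xl) ∧
      ∀ i, xl i ∈ convexHull ℝ (Set.range x₀) :=
  agents_converge_to_leader_polytope_general n k m A hsymm hnonneg b hb x₀ hcomp x hx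
end

section
/- Consider n agents on the real line with dynamics x' = -H x + B(1 x_0^1 + components for x_0^2) for two leaders at positions x_0^1 < x_0^2, with H = L + B^1 + B^2 positive definite. Then the equilibrium x* = H^{-1}(B^1 1 x_0^1 + B^2 1 x_0^2) satisfies x_0^1 <= x_i* <= x_0^2 for every agent i. -/
open Matrix

/-!
Row by row, `H x = B¹1 xa + B²1 xb` reads
`(b₁ i + b₂ i) xᵢ + ∑ⱼ aᵢⱼ (xᵢ - xⱼ) = b₁ i xa + b₂ i xb`, so a discrete maximum principle applies.
At a vertex where `x` attains its maximum every Laplacian term is nonnegative, so if the maximum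
exceeded `xb` the vertex could carry no leader weight and all its neighbours would share the
maximum. Propagating along a path to a vertex attached to a leader gives a contradiction. The lower
bound is the same argument applied to `-x`.
-/

section MaximumPrinciple

variable {ι : Type*} [Fintype ι] {A : Matrix ι ι ℝ} {d x : ι → ℝ} {M : ℝ}

lemma weight_eq_zero_and_eq_of_adj_of_isMax (hA : ∀ i j, 0 ≤ A i j) (hd : ∀ i, 0 ≤ d i)
    (hx : ∀ i, d i * x i + ∑ j, A i j * (x i - x j) ≤ d i * M)
    {a : ι} (hmax : ∀ j, x j ≤ x a) (hM : M < x a) :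
    d a = 0 ∧ ∀ c, 0 < A a c → x c = x a := by
  have hterm : ∀ c ∈ Finset.univ, 0 ≤ A a c * (x a - x c) :=
    fun c _ => mul_nonneg (hA a c) (sub_nonneg.mpr (hmax c))
  have hsum := Finset.sum_nonneg hterm
  have hda : d a = 0 := by
    by_contra hne
    have hpos : 0 < d a := lt_of_le_of_ne (hd a) (Ne.symm hne)
    nlinarith [hx a]
  refine ⟨hda, fun c hc => ?_⟩
  have hzero : ∑ j, A a j * (x a - x j) = 0 := by
    have := hx a
    rw [hda] at this
    linarith
  have hc0 := (Finset.sum_eq_zero_iff_of_nonneg hterm).mp hzero c (Finset.mem_univ c)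
  linarith [(mul_eq_zero.mp hc0).resolve_left hc.ne']

theorem le_of_grounded_laplacian_le (hA : ∀ i j, 0 ≤ A i j) (hd : ∀ i, 0 ≤ d i)
    (hreach : ∀ i, ∃ j, Relation.ReflTransGen (fun a c => 0 < A a c) i j ∧ 0 < d j)
    (hx : ∀ i, d i * x i + ∑ j, A i j * (x i - x j) ≤ d i * M) (i : ι) :
    x i ≤ M := by
  obtain ⟨i₀, -, hi₀⟩ := Finset.exists_max_image Finset.univ x ⟨i, Finset.mem_univ i⟩
  have hmax : ∀ j, x j ≤ x i₀ := fun j => hi₀ j (Finset.mem_univ j)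
  suffices x i₀ ≤ M from (hmax i).trans this
  by_contra! hM
  obtain ⟨j, hpath, hdj⟩ := hreach i₀
  have key {a : ι} (hmax : ∀ j, x j ≤ x a) (hM : M < x a) :=
    weight_eq_zero_and_eq_of_adj_of_isMax hA hd hx hmax hM
  have hj : x j = x i₀ := by
    clear hdj
    induction hpath with
    | refl => rfl
    | tail _ hbc ih =>
      rw [(key (ih ▸ hmax) (ih ▸ hM)).2 _ hbc, ih]
  exact hdj.ne' (key (hj ▸ hmax) (hj ▸ hM)).1

theorem mem_Icc_of_grounded_laplacian_eq {f : ι → ℝ} {m : ℝ} (hA : ∀ i j, 0 ≤ A i j)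
    (hd : ∀ i, 0 ≤ d i)
    (hreach : ∀ i, ∃ j, Relation.ReflTransGen (fun a c => 0 < A a c) i j ∧ 0 < d j)
    (hx : ∀ i, d i * x i + ∑ j, A i j * (x i - x j) = f i)
    (hf : ∀ i, d i * m ≤ f i ∧ f i ≤ d i * M) (i : ι) :
    x i ∈ Set.Icc m M := by
  have hneg : ∀ i, d i * -x i + ∑ j, A i j * (-x i - -x j) ≤ d i * -m := fun i => by
    have hs : ∑ j, A i j * (-x i - -x j) = -∑ j, A i j * (x i - x j) := by
      rw [← Finset.sum_neg_distrib]
      exact Finset.sum_congr rfl fun j _ => by ring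
    linarith [hx i, (hf i).1]
  refine ⟨?_, le_of_grounded_laplacian_le hA hd hreach (fun i => (hx i).trans_le (hf i).2) i⟩
  linarith [le_of_grounded_laplacian_le hA hd hreach hneg i]

end MaximumPrinciple

lemma laplacian_add_diagonal_mulVec_apply {ι : Type*} [Fintype ι] [DecidableEq ι]
    (A : Matrix ι ι ℝ) (d x : ι → ℝ) (i : ι) :
    ((diagonal (fun i => ∑ j, A i j) - A + diagonal d) *ᵥ x) i
      = d i * x i + ∑ j, A i j * (x i - x j) := by
  rw [add_mulVec, sub_mulVec, Pi.add_apply, Pi.sub_apply, mulVec_diagonal, mulVec_diagonal]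
  simp only [mulVec, dotProduct, mul_sub, Finset.sum_sub_distrib, Finset.sum_mul]
  ring

theorem two_leader_equilibrium_in_interval_general
    (n : ℕ) (A : Matrix (Fin n) (Fin n) ℝ)
    (hnonneg : ∀ i j, 0 ≤ A i j)
    (L : Matrix (Fin n) (Fin n) ℝ)
    (hL : L = Matrix.diagonal (fun i => ∑ j, A i j) - A)
    (b₁ b₂ : Fin n → ℝ) (hb₁ : ∀ i, 0 ≤ b₁ i) (hb₂ : ∀ i, 0 ≤ b₂ i)
    (hcomp : ∀ i : Fin n, ∃ j : Fin n,
      Relation.ReflTransGen (fun a c => 0 < A a c) i j ∧ (0 < b₁ j ∨ 0 < b₂ j))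
    (H : Matrix (Fin n) (Fin n) ℝ)
    (hH : H = L + Matrix.diagonal b₁ + Matrix.diagonal b₂)
    (hpd : H.PosDef)
    (xa xb : ℝ) (hlt : xa < xb)
    (xs : Fin n → ℝ)
    (hxs : xs = H⁻¹ *ᵥ (fun i => b₁ i * xa + b₂ i * xb)) :
    ∀ i, xa ≤ xs i ∧ xs i ≤ xb := by
  have hHxs : H *ᵥ xs = fun i => b₁ i * xa + b₂ i * xb := by
    rw [hxs, mulVec_mulVec, mul_nonsing_inv _ (isUnit_iff_isUnit_det H |>.mp hpd.isUnit),
      one_mulVec]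
  have hrow : ∀ i, (b₁ i + b₂ i) * xs i + ∑ j, A i j * (xs i - xs j) = b₁ i * xa + b₂ i * xb :=
    fun i => by
      rw [← laplacian_add_diagonal_mulVec_apply A (fun i => b₁ i + b₂ i), ← diagonal_add b₁ b₂,
        ← add_assoc, ← hL, ← hH, hHxs]
  have hreach : ∀ i, ∃ j, Relation.ReflTransGen (fun a c => 0 < A a c) i j ∧ 0 < b₁ j + b₂ j :=
    fun i => (hcomp i).imp fun j ⟨hpath, hj⟩ =>
      ⟨hpath, hj.elim (fun h => by linarith [hb₂ j]) (fun h => by linarith [hb₁ j])⟩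
  refine mem_Icc_of_grounded_laplacian_eq hnonneg (fun i => add_nonneg (hb₁ i) (hb₂ i)) hreach
    hrow fun i => ⟨?_, ?_⟩
  · nlinarith [mul_le_mul_of_nonneg_left hlt.le (hb₂ i)]
  · nlinarith [mul_le_mul_of_nonneg_left hlt.le (hb₁ i)]

/-- Scalar two-leader case: the equilibrium `x* = H⁻¹(B¹1 xa + B²1 xb)` satisfies
`xa ≤ xᵢ* ≤ xb` for every agent `i`. -/
theorem two_leader_equilibrium_in_interval
    (n : ℕ) (A : Matrix (Fin n) (Fin n) ℝ)
    (hsymm : ∀ i j, A i j = A j i)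
    (hnonneg : ∀ i j, 0 ≤ A i j)
    (hdiag : ∀ i, A i i = 0)
    (L : Matrix (Fin n) (Fin n) ℝ)
    (hL : L = Matrix.diagonal (fun i => ∑ j, A i j) - A)
    (b₁ b₂ : Fin n → ℝ) (hb₁ : ∀ i, 0 ≤ b₁ i) (hb₂ : ∀ i, 0 ≤ b₂ i)
    (hcomp : ∀ i : Fin n, ∃ j : Fin n,
      Relation.ReflTransGen (fun a c => 0 < A a c) i j ∧ (0 < b₁ j ∨ 0 < b₂ j))
    (H : Matrix (Fin n) (Fin n) ℝ)
    (hH : H = L + Matrix.diagonal b₁ + Matrix.diagonal b₂)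
    (hpd : H.PosDef)
    (xa xb : ℝ) (hlt : xa < xb)
    (xs : Fin n → ℝ)
    (hxs : xs = H⁻¹ *ᵥ (fun i => b₁ i * xa + b₂ i * xb)) :
    ∀ i, xa ≤ xs i ∧ xs i ≤ xb :=
  two_leader_equilibrium_in_interval_general n A hnonneg L hL b₁ b₂ hb₁ hb₂ hcomp H hH hpd xa xb hlt
    xs hxs
end
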